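/- The language L_3 = {a^n b^n c^n : n ≥ 1} is (f, h_R)-tuple-substitutable for every f, where h_R is the transition morphism of the four-state DFA for R = a*b*c*: for all d ≥ 1 and all d-tuples x, y of words with h_R(x_i) = h_R(y_i) for each i, if some arity-d sentence context E satisfies E[x] ∈ L_3 and E[y] ∈ L_3, then for every arity-d sentence context F, F[x] ∈ L_3 if and only if F[y] ∈ L_3. -/

import Mathlib

inductive ABC : Type
  | a | b | c
deriving DecidableEq

/-- `L₃ = {aⁿbⁿcⁿ : n ≥ 1}`. -/
def L3 : Set (List ABC) :=
  {w | ∃ n : ℕ, 1 ≤ n ∧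
    w = List.replicate n ABC.a ++ List.replicate n ABC.b ++ List.replicate n ABC.c}

/-- States of the standard four-state DFA for `R = a*b*c*`. -/
inductive St : Type
  | s0 | s1 | s2 | bot
deriving DecidableEq

/-- Letter transitions of the DFA for `R = a*b*c*`. -/
def step : ABC → St → St
  | ABC.a, St.s0 => St.s0
  | ABC.a, _ => St.bot
  | ABC.b, St.s0 => St.s1
  | ABC.b, St.s1 => St.s1
  | ABC.b, _ => St.bot
  | ABC.c, St.s0 => St.s2
  | ABC.c, St.s1 => St.s2
  | ABC.c, St.s2 => St.s2
  | ABC.c, _ => St.bot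

/-- The transition morphism `h_R`. -/
def hR (w : List ABC) : St → St :=
  fun q => w.foldl (fun s ch => step ch s) q

structure SContext (α : Type) (d : ℕ) where
  perm : Equiv.Perm (Fin d)
  bound : Fin (d + 1) → List α

def SContext.fill {α : Type} {d : ℕ} (E : SContext α d) (x : Fin d → List α) : List α :=
  (List.ofFn fun i : Fin d => E.bound i.castSucc ++ x (E.perm i)).flatten ++
    E.bound (Fin.last d)

/-!
A word lies in `L₃` exactly when it is nonempty, is accepted by the DFA for `a*b*c*`, and has
equally many `a`s, `b`s and `c`s. Acceptance and emptiness of `F[x]` depend only on the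
`h_R`-images of the `xᵢ` (only `ε` acts as the identity), while each letter count of `F[x]` is that
of the bare context plus the letter count of the tuple. So passing from `x` to `y` shifts all
three counts of `F[·]` by one and the same amount, which `E[x], E[y] ∈ L₃` forces to be uniform
across letters.
-/

namespace SContext

variable {α : Type} {d : ℕ}

theorem fill_congr {β : Type} (f : List α → β)
    (hf : ∀ u u' v v', f u = f u' → f v = f v' → f (u ++ v) = f (u' ++ v'))
    (E : SContext α d) {x y : Fin d → List α} (h : ∀ i, f (x i) = f (y i)) :
    f (E.fill x) = f (E.fill y) := by
  have flatten_map : ∀ (l : List (Fin d)) (g g' : Fin d → List α), (∀ i, f (g i) = f (g' i)) →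
      f (l.map g).flatten = f (l.map g').flatten := by
    intro l g g' hg
    induction l with
    | nil => rfl
    | cons i l ih => exact hf _ _ _ _ (hg i) ih
  refine hf _ _ _ _ ?_ rfl
  simp only [List.ofFn_eq_map]
  exact flatten_map _ _ _ fun i => hf _ _ _ _ rfl (h _)

theorem count_fill [DecidableEq α] (E : SContext α d) (x : Fin d → List α) (a : α) :
    (E.fill x).count a = (E.fill fun _ => []).count a + ∑ i, (x i).count a := by
  simp only [fill, List.count_append, List.count_flatten, List.map_ofFn, List.sum_ofFn,
    Function.comp_def, List.count_nil, add_zero, Finset.sum_add_distrib,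
    Equiv.sum_comp E.perm fun i => (x i).count a]
  ring

end SContext

section

open ABC St

theorem hR_cons (ℓ : ABC) (w : List ABC) (q : St) : hR (ℓ :: w) q = hR w (step ℓ q) := rfl

theorem hR_append (u v : List ABC) (q : St) : hR (u ++ v) q = hR v (hR u q) := by
  simp [hR, List.foldl_append]

theorem hR_bot (w : List ABC) : hR w bot = bot := by
  induction w with
  | nil => rfl
  | cons ℓ w ih => cases ℓ <;> exact ih

theorem hR_ne_s0 (w : List ABC) {q : St} (hq : q ≠ s0) : hR w q ≠ s0 := by
  induction w generalizing q with
  | nil => exact hq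
  | cons ℓ w ih => exact ih (by cases ℓ <;> cases q <;> simp_all [step])

theorem eq_nil_of_hR_eq_id {w : List ABC} (h : hR w = id) : w = [] := by
  cases w with
  | nil => rfl
  | cons ℓ w =>
    cases ℓ
    · exact absurd (congrFun h s1) (by simp [hR_cons, step, hR_bot])
    · exact absurd (congrFun h s0) (hR_ne_s0 w (q := s1) (by simp))
    · exact absurd (congrFun h s0) (hR_ne_s0 w (q := s2) (by simp))

theorem eq_nil_iff_of_hR_eq {u v : List ABC} (h : hR u = hR v) : u = [] ↔ v = [] :=
  ⟨fun hu => eq_nil_of_hR_eq_id (by rw [← h, hu]; rfl),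
    fun hv => eq_nil_of_hR_eq_id (by rw [h, hv]; rfl)⟩

theorem hR_replicate {ℓ : ABC} {q : St} (h : step ℓ q = q) (n : ℕ) :
    hR (List.replicate n ℓ) q = q := by
  induction n with
  | zero => rfl
  | succ n ih => rwa [List.replicate_succ, hR_cons, h]

theorem exists_replicate_of_hR_s2_ne_bot {w : List ABC} (h : hR w s2 ≠ bot) :
    ∃ k, w = List.replicate k c := by
  induction w with
  | nil => exact ⟨0, rfl⟩
  | cons ℓ w ih =>
    cases ℓ <;> simp only [hR_cons, step, hR_bot, ne_eq, not_true_eq_false] at h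
    obtain ⟨k, rfl⟩ := ih h
    exact ⟨k + 1, rfl⟩

theorem exists_replicate_of_hR_s1_ne_bot {w : List ABC} (h : hR w s1 ≠ bot) :
    ∃ j k, w = List.replicate j b ++ List.replicate k c := by
  induction w with
  | nil => exact ⟨0, 0, rfl⟩
  | cons ℓ w ih =>
    cases ℓ <;> simp only [hR_cons, step, hR_bot, ne_eq, not_true_eq_false] at h
    · obtain ⟨j, k, rfl⟩ := ih h
      exact ⟨j + 1, k, rfl⟩
    · obtain ⟨k, rfl⟩ := exists_replicate_of_hR_s2_ne_bot h
      exact ⟨0, k + 1, rfl⟩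

theorem exists_replicate_of_hR_s0_ne_bot {w : List ABC} (h : hR w s0 ≠ bot) :
    ∃ i j k, w = List.replicate i a ++ List.replicate j b ++ List.replicate k c := by
  induction w with
  | nil => exact ⟨0, 0, 0, rfl⟩
  | cons ℓ w ih =>
    cases ℓ <;> simp only [hR_cons, step] at h
    · obtain ⟨i, j, k, rfl⟩ := ih h
      exact ⟨i + 1, j, k, rfl⟩
    · obtain ⟨j, k, rfl⟩ := exists_replicate_of_hR_s1_ne_bot h
      exact ⟨0, j + 1, k, rfl⟩
    · obtain ⟨k, rfl⟩ := exists_replicate_of_hR_s2_ne_bot h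
      exact ⟨0, 0, k + 1, rfl⟩

theorem hR_replicate_abc {n : ℕ} (hn : 1 ≤ n) :
    hR (List.replicate n a ++ List.replicate n b ++ List.replicate n c) s0 = s2 := by
  obtain ⟨m, rfl⟩ := Nat.exists_eq_add_of_le' hn
  have hb : hR (List.replicate (m + 1) b) s0 = s1 := hR_replicate (q := s1) rfl m
  have hc : hR (List.replicate (m + 1) c) s1 = s2 := hR_replicate (q := s2) rfl m
  rw [hR_append, hR_append, hR_replicate (ℓ := a) (q := s0) rfl, hb, hc]

theorem mem_L3_iff {w : List ABC} :
    w ∈ L3 ↔ hR w s0 ≠ bot ∧ w.count a = w.count b ∧ w.count b = w.count c ∧ w ≠ [] := by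
  constructor
  · rintro ⟨n, hn, rfl⟩
    refine ⟨by rw [hR_replicate_abc hn]; simp, by simp [List.count_replicate],
      by simp [List.count_replicate], by simp; omega⟩
  · rintro ⟨hR_ne, hab, hbc, hne⟩
    obtain ⟨i, j, k, rfl⟩ := exists_replicate_of_hR_s0_ne_bot hR_ne
    simp only [List.count_append, List.count_replicate, beq_iff_eq, reduceCtorEq, ↓reduceIte,
      add_zero, zero_add] at hab hbc
    subst hab hbc
    exact ⟨i, Nat.pos_of_ne_zero fun hi => hne (by simp [hi]), rfl⟩

theorem mem_L3_of_fill {d : ℕ} {x y : Fin d → List ABC} (hxy : ∀ i, hR (x i) = hR (y i))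
    {E : SContext ABC d} (hEx : E.fill x ∈ L3) (hEy : E.fill y ∈ L3)
    {F : SContext ABC d} (hFx : F.fill x ∈ L3) : F.fill y ∈ L3 := by
  rw [mem_L3_iff] at hEx hEy hFx ⊢
  obtain ⟨-, hEab, hEbc, -⟩ := hEx
  obtain ⟨-, hEab', hEbc', -⟩ := hEy
  obtain ⟨hFR, hFab, hFbc, hFne⟩ := hFx
  simp only [E.count_fill x, E.count_fill y, F.count_fill x, F.count_fill y]
    at hEab hEbc hEab' hEbc' hFab hFbc ⊢
  have hR_eq := F.fill_congr hR (fun u u' v v' hu hv => by ext q; simp [hR_append, hu, hv]) hxy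
  have nil_iff : F.fill x = [] ↔ F.fill y = [] :=
    Iff.of_eq <| F.fill_congr (fun u : List ABC => u = []) (fun u u' v v' hu hv => by simp [hu, hv])
      fun i => propext (eq_nil_iff_of_hR_eq (hxy i))
  exact ⟨hR_eq ▸ hFR, by omega, by omega, (not_congr nil_iff).mp hFne⟩

end

/-- `L₃` is `(f, h_R)`-tuple-substitutable for every `f`: for all `d ≥ 1`
and all `d`-tuples with componentwise equal `h_R`-images, sharing one accepting sentence
context forces equality of all accepting sentence contexts. -/
theorem L3_tuple_substitutable :
    ∀ d : ℕ, 1 ≤ d → ∀ x y : Fin d → List ABC,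
      (∀ i, hR (x i) = hR (y i)) →
      (∃ E : SContext ABC d, E.fill x ∈ L3 ∧ E.fill y ∈ L3) →
      ∀ F : SContext ABC d, (F.fill x ∈ L3 ↔ F.fill y ∈ L3) := by
  rintro d - x y hxy ⟨E, hEx, hEy⟩ F
  exact ⟨mem_L3_of_fill hxy hEx hEy, mem_L3_of_fill (fun i => (hxy i).symm) hEy hEx⟩
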